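/- Let α > 0, s₀ ∈ (0, 1/2], 0 < T ≤ (1−s₀)/α, let u_{in0}, u_{in1} be continuous on [s₀,1], and let μ, u₀, u₁, w be as defined in the context. Then the function u(x,t) = w(x,t) + ( u₀(x−αt) + u₀(x+αt) )/2 + (1/(2α))·∫_{x−αt}^{x+αt} u₁(η) dη satisfies the boundary condition u(1,t) = μ(t) for every t ∈ (0,T]; that is, the odd reflection of the data about x = 1 together with the correction term w enforces the prescribed boundary value μ(t) = u_{in1}(1)·t + u_{in0}(1) at x = 1. -/

import Mathlib

open MeasureTheory intervalIntegral

/-!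
STATEMENT 8: The D'Alembert representation
`u(x,t) = w(x,t) + (u₀(x−αt)+u₀(x+αt))/2 + (1/(2α))∫_{x−αt}^{x+αt} u₁`
(with `u₀, u₁` the odd extensions of the data about `x = 1` and `w` the
boundary-correction term) satisfies the boundary condition
`u(1,t) = μ(t) = u_{in1}(1)·t + u_{in0}(1)` for every `t ∈ (0,T]`.
-/

/-- Odd extension about `x = 1`: equals `f x` for `x ≤ 1` and `−f (2−x)` for `x > 1`. -/
noncomputable def oddExt (f : ℝ → ℝ) (x : ℝ) : ℝ :=
  if x ≤ 1 then f x else -f (2 - x)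

/-- The correction term `w(x,t) = μ((x+αt−1)/α)` if `x+αt ≥ 1`, else `0`,
where `μ(t) = u_{in1}(1)·t + u_{in0}(1)`. -/
noncomputable def wFun (α : ℝ) (uin0 uin1 : ℝ → ℝ) (x t : ℝ) : ℝ :=
  if 1 ≤ x + α * t then uin1 1 * ((x + α * t - 1) / α) + uin0 1 else 0

/-- The D'Alembert representation formula in the region `D_T^{(I)}`. -/
noncomputable def dAlembert (α : ℝ) (uin0 uin1 : ℝ → ℝ) (x t : ℝ) : ℝ :=
  wFun α uin0 uin1 x t + (oddExt uin0 (x - α * t) + oddExt uin0 (x + α * t)) / 2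
    + (1 / (2 * α)) * ∫ η in (x - α * t)..(x + α * t), oddExt uin1 η

theorem integral_eq_zero_of_ae_odd_about {E : Type*} [NormedAddCommGroup E] [NormedSpace ℝ E]
    {f : ℝ → E} {c : ℝ} (hf : ∀ᵐ x, f (2 * c - x) = -f x) (a : ℝ) :
    ∫ x in (c - a)..(c + a), f x = 0 := by
  have hreflect : ∫ x in (c - a)..(c + a), f x = -∫ x in (c - a)..(c + a), f x := by
    calc ∫ x in (c - a)..(c + a), f x
        = ∫ x in (c - a)..(c + a), f (2 * c - x) := by
          rw [integral_comp_sub_left]; congr 1 <;> ring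
      _ = ∫ x in (c - a)..(c + a), -f x :=
          integral_congr_ae (hf.mono fun x hx _ => hx)
      _ = -∫ x in (c - a)..(c + a), f x := integral_neg
  rw [eq_neg_iff_add_eq_zero, ← two_smul ℝ, smul_eq_zero] at hreflect
  exact hreflect.resolve_left two_ne_zero

theorem oddExt_two_sub (f : ℝ → ℝ) {x : ℝ} (hx : x ≠ 1) : oddExt f (2 - x) = -oddExt f x := by
  rcases hx.lt_or_gt with hlt | hgt
  · simp [oddExt, hlt.le, show ¬2 - x ≤ 1 by linarith]
  · simp [oddExt, hgt.not_ge, show 2 - x ≤ 1 by linarith]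

theorem oddExt_one_sub_add_oddExt_one_add (f : ℝ → ℝ) {a : ℝ} (ha : a ≠ 0) :
    oddExt f (1 - a) + oddExt f (1 + a) = 0 := by
  have h := oddExt_two_sub f (x := 1 - a) (by simpa [sub_eq_self] using ha)
  rw [show 2 - (1 - a) = 1 + a by ring] at h
  rw [h, add_neg_cancel]

theorem integral_oddExt_one_sub_one_add (f : ℝ → ℝ) (a : ℝ) :
    ∫ x in (1 - a)..(1 + a), oddExt f x = 0 := by
  refine integral_eq_zero_of_ae_odd_about ?_ a
  filter_upwards [Measure.ae_ne volume (1 : ℝ)] with x hx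
  rw [mul_one]
  exact oddExt_two_sub f hx

theorem wFun_one (α : ℝ) (uin0 uin1 : ℝ → ℝ) {t : ℝ} (hα : α ≠ 0) (ht : 0 ≤ α * t) :
    wFun α uin0 uin1 1 t = uin1 1 * t + uin0 1 := by
  rw [wFun, if_pos (by linarith), add_sub_cancel_left, mul_div_cancel_left₀ t hα]

theorem dAlembert_boundary_value (α T : ℝ) (uin0 uin1 : ℝ → ℝ)
    (hα : 0 < α) :
    ∀ t ∈ Set.Ioc 0 T, dAlembert α uin0 uin1 1 t = uin1 1 * t + uin0 1 := by
  intro t ht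
  have hαt : 0 < α * t := mul_pos hα ht.1
  rw [dAlembert, wFun_one α uin0 uin1 hα.ne' hαt.le,
    oddExt_one_sub_add_oddExt_one_add uin0 hαt.ne', integral_oddExt_one_sub_one_add]
  ring
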